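/- For each integer n ≥ 1 and spline order k ≥ 0, the supremum over ξ ∈ [−π, π] of w_{k,n}(ξ) := ξ^{2(k+1)}/(ξ + 2πn)^{2(k+1)} + ξ^{2(k+1)}/(ξ − 2πn)^{2(k+1)} equals w_{k,n}(π) = (2n−1)^{−2(k+1)} + (2n+1)^{−2(k+1)}; this holds because w_{k,n} is even and convex on [−π, π]. -/

import Mathlib

/-! Put `g(x) = x^{2(k+1)}/(x+a)^{2(k+1)}` with `a = 2πn`. Then `w_{k,n}(ξ) = g(ξ) + g(−ξ)`, so the
weight is even, and `g''(x) = (2k+2) a x^{2k} ((2k+1)a − 2x)/(x+a)^{2k+4}` is nonnegative for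
`−a < x ≤ a/2`. Since `a ≥ 2π`, both `g` and `g(−·)` are convex on `[−π, π]`. A convex function on an
interval attains its maximum at an endpoint, and by evenness both endpoints give `w_{k,n}(π)`. -/

open Real

noncomputable section

/-- The weight function `w_{k,n}(ξ) = ξ^{2(k+1)}/(ξ+2πn)^{2(k+1)} + ξ^{2(k+1)}/(ξ−2πn)^{2(k+1)}`. -/
def splineWeight (k n : ℕ) (ξ : ℝ) : ℝ :=
  ξ ^ (2 * (k + 1)) / (ξ + 2 * Real.pi * n) ^ (2 * (k + 1)) +
    ξ ^ (2 * (k + 1)) / (ξ - 2 * Real.pi * n) ^ (2 * (k + 1))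

open Set

lemma hasDerivAt_pow_div_add_pow (p q : ℕ) (a : ℝ) {x : ℝ} (hx : x + a ≠ 0) :
    HasDerivAt (fun x : ℝ => x ^ (p + 1) / (x + a) ^ (q + 1))
      (x ^ p * ((p + 1) * (x + a) - (q + 1) * x) / (x + a) ^ (q + 2)) x := by
  have hnum := hasDerivAt_pow (p + 1) x
  have hden := ((hasDerivAt_id' x).add_const a).fun_pow (q + 1)
  refine (hnum.div hden (pow_ne_zero _ hx)).congr_deriv ?_
  simp only [Nat.add_sub_cancel, mul_one]
  field_simp
  push_cast
  ring

def powRatio (k : ℕ) (a x : ℝ) : ℝ := x ^ (2 * (k + 1)) / (x + a) ^ (2 * (k + 1))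

lemma convexOn_powRatio (k : ℕ) {a : ℝ} (ha : 0 < a) :
    ConvexOn ℝ (Ioc (-a) (a / 2)) (powRatio k a) := by
  have hpos : ∀ x ∈ Ioc (-a) (a / 2), 0 < x + a := fun x hx => by linarith [hx.1]
  refine convexOn_of_hasDerivWithinAt2_nonneg (convex_Ioc _ _)
    (f' := fun x => (2 * k + 2) * a * (x ^ (2 * k + 1) / (x + a) ^ (2 * k + 3)))
    (f'' := fun x =>
      (2 * k + 2) * a * x ^ (2 * k) * ((2 * k + 1) * a - 2 * x) / (x + a) ^ (2 * k + 4))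
    ?_ ?_ ?_ ?_
  · exact ContinuousOn.div (by fun_prop) (by fun_prop) fun x hx => pow_ne_zero _ (hpos x hx).ne'
  all_goals
    rw [interior_Ioc]
    intro x hx
    have hxa := hpos x (Ioo_subset_Ioc_self hx)
  · refine ((hasDerivAt_pow_div_add_pow (2 * k + 1) (2 * k + 1) a hxa.ne').congr_deriv
      ?_).hasDerivWithinAt
    push_cast
    ring
  · refine (((hasDerivAt_pow_div_add_pow (2 * k) (2 * k + 2) a hxa.ne').const_mul
      ((2 * k + 2) * a)).congr_deriv ?_).hasDerivWithinAt
    push_cast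
    ring
  · have hlin : 0 ≤ (2 * k + 1) * a - 2 * x := by nlinarith [hx.2]
    have hpow : 0 ≤ x ^ (2 * k) := (even_two_mul k).pow_nonneg x
    exact div_nonneg (mul_nonneg (by positivity) hlin) (pow_nonneg hxa.le _)

lemma splineWeight_eq_powRatio_add (k n : ℕ) (ξ : ℝ) :
    splineWeight k n ξ = powRatio k (2 * π * n) ξ + powRatio k (2 * π * n) (-ξ) := by
  have hm : Even (2 * (k + 1)) := even_two_mul _
  rw [splineWeight, powRatio, powRatio, hm.neg_pow, neg_add_eq_sub, ← neg_sub, hm.neg_pow]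

lemma splineWeight_neg (k n : ℕ) (ξ : ℝ) : splineWeight k n (-ξ) = splineWeight k n ξ := by
  rw [splineWeight_eq_powRatio_add, splineWeight_eq_powRatio_add, neg_neg, add_comm]

lemma convexOn_splineWeight (k : ℕ) {n : ℕ} (hn : 1 ≤ n) :
    ConvexOn ℝ (Icc (-π) π) (splineWeight k n) := by
  have hπn : π ≤ π * n := le_mul_of_one_le_right pi_pos.le (by exact_mod_cast hn)
  have hconv := convexOn_powRatio k (a := 2 * π * n) (by linarith [pi_pos])
  have hIcc : Icc (-π) π ⊆ Ioc (-(2 * π * n)) (2 * π * n / 2) := fun x hx =>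
    ⟨by linarith [hx.1, pi_pos], by linarith [hx.2]⟩
  have hIcc_neg :
      Icc (-π) π ⊆ (-LinearMap.id : ℝ →ₗ[ℝ] ℝ) ⁻¹' Ioc (-(2 * π * n)) (2 * π * n / 2) :=
    fun x hx => show -x ∈ _ from hIcc ⟨by linarith [hx.2], by linarith [hx.1]⟩
  have hsum : splineWeight k n =
      powRatio k (2 * π * n) + powRatio k (2 * π * n) ∘ ⇑(-LinearMap.id : ℝ →ₗ[ℝ] ℝ) :=
    funext fun ξ => splineWeight_eq_powRatio_add k n ξ
  rw [hsum]
  exact (hconv.subset hIcc (convex_Icc _ _)).add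
    ((hconv.comp_linearMap _).subset hIcc_neg (convex_Icc _ _))

lemma splineWeight_pi (k : ℕ) {n : ℕ} (hn : 1 ≤ n) :
    splineWeight k n π =
      ((2 * (n : ℝ) - 1) ^ (2 * (k + 1)))⁻¹ + ((2 * (n : ℝ) + 1) ^ (2 * (k + 1)))⁻¹ := by
  have hn' : (1 : ℝ) ≤ n := by exact_mod_cast hn
  have hm : Even (2 * (k + 1)) := even_two_mul _
  rw [splineWeight, show π + 2 * π * n = π * (2 * n + 1) by ring,
    show π - 2 * π * n = -(π * (2 * n - 1)) by ring, hm.neg_pow, mul_pow, mul_pow]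
  have hodd : (2 * (n : ℝ) - 1) ≠ 0 := by linarith
  field_simp
  ring

/-- For `n ≥ 1` and `k ≥ 0`, the supremum of `w_{k,n}` over `[−π,π]` is
attained at `ξ = π` and equals `(2n−1)^{−2(k+1)} + (2n+1)^{−2(k+1)}`; moreover `w_{k,n}` is
even and convex on `[−π,π]`. -/
theorem splineWeight_sup (k n : ℕ) (hn : 1 ≤ n) :
    IsGreatest (splineWeight k n '' Set.Icc (-Real.pi) Real.pi) (splineWeight k n Real.pi) ∧
    splineWeight k n Real.pi =
      ((2 * (n : ℝ) - 1) ^ (2 * (k + 1)))⁻¹ + ((2 * (n : ℝ) + 1) ^ (2 * (k + 1)))⁻¹ ∧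
    (∀ ξ : ℝ, splineWeight k n (-ξ) = splineWeight k n ξ) ∧
    ConvexOn ℝ (Set.Icc (-Real.pi) Real.pi) (splineWeight k n) := by
  have hconv := convexOn_splineWeight k hn
  have hπ : -π ≤ π := by linarith [pi_pos]
  refine ⟨⟨mem_image_of_mem _ (right_mem_Icc.2 hπ), ?_⟩, splineWeight_pi k hn,
    splineWeight_neg k n, hconv⟩
  rintro _ ⟨ξ, hξ, rfl⟩
  simpa [splineWeight_neg] using
    hconv.le_max_of_mem_Icc (left_mem_Icc.2 hπ) (right_mem_Icc.2 hπ) hξ
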